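/- Let φ : C ⊗ A → K be a rational pairing of a coalgebra C with an algebra A. If R_φ(N / R_φ(N)) = 0 for every left A-module N, then the full subcategory of rational left A-modules (equivalently, the image of M^C in _A M) is a (hereditary) torsion class in the category of left A-modules: it is closed under quotients, coproducts, subobjects, and extensions, and (T, F) with F = {N : R_φ(N) = 0} is a torsion pair. -/

import Mathlib

open TensorProduct

universe u

noncomputable section

namespace Formal

variable {K : Type u} [Field K] {C : Type u} [AddCommGroup C] [Module K C] [Coalgebra K C]
variable {A : Type u} [Ring A] [Algebra K A]

/-- The map `a ↦ φ(- ⊗ a) : C →ₗ[K] K` induced by a pairing `φ : C ⊗ A → K`. -/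
def pairMap (φ : C ⊗[K] A →ₗ[K] K) (a : A) : C →ₗ[K] K :=
  φ ∘ₗ (TensorProduct.mk K C A).flip a

/-- The map `δ_V : V ⊗ C → Hom_K(A, V)` of a pairing, as a bare function. -/
def deltaFun (φ : C ⊗[K] A →ₗ[K] K) (V : Type u) [AddCommGroup V] [Module K V] :
    V ⊗[K] C → A → V :=
  fun x a => (TensorProduct.rid K V) (LinearMap.lTensor V (pairMap φ a) x)

/-- The convolution product on `C^* = Hom_K(C, K)`. -/
def conv (f g : C →ₗ[K] K) : C →ₗ[K] K :=
  LinearMap.mul' K K ∘ₗ TensorProduct.map f g ∘ₗ Coalgebra.comul (R := K) (A := C)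

/-- `φ` is a rational pairing: all `δ_V` are injective and `a ↦ φ(- ⊗ a)` is an algebra map
to the convolution algebra `C^*`. -/
def IsRationalPairing (φ : C ⊗[K] A →ₗ[K] K) : Prop :=
  (∀ (V : Type u) (_ : AddCommGroup V) (_ : Module K V), Function.Injective (deltaFun φ V)) ∧
  pairMap φ 1 = Coalgebra.counit (R := K) (A := C) ∧
  (∀ a b : A, pairMap φ (a * b) = conv (pairMap φ a) (pairMap φ b))

/-- The finite topology on the dual `C^*` (pointwise convergence, `K` discrete). -/
def fintopDual : TopologicalSpace (C →ₗ[K] K) :=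
  TopologicalSpace.induced (fun f => (f : C → K))
    (@Pi.topologicalSpace C (fun _ => K) (fun _ => ⊥))

/-- The linear topology on `A` induced from the finite topology on `C^*` via the pairing. -/
def topA (φ : C ⊗[K] A →ₗ[K] K) : TopologicalSpace A :=
  TopologicalSpace.induced (pairMap φ) fintopDual

/-- A left ideal of `A` is closed and cofinite (for the topology induced by `φ`). -/
def ClosedCofinite (φ : C ⊗[K] A →ₗ[K] K) (I : Submodule A A) : Prop :=
  @IsClosed A (topA φ) (I : Set A) ∧
    FiniteDimensional K (A ⧸ I.restrictScalars K)

/-- The annihilator of an element of a left `A`-module. -/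
def ann (N : Type u) [AddCommGroup N] [Module A N] (n : N) : Submodule A A :=
  LinearMap.ker (LinearMap.toSpanSingleton A N n)

/-- An element of a left `A`-module is rational when its annihilator is a closed cofinite
left ideal. -/
def RatElem (φ : C ⊗[K] A →ₗ[K] K) (N : Type u) [AddCommGroup N] [Module A N] (n : N) :
    Prop :=
  ClosedCofinite φ (ann N n)

end Formal
end

namespace Formal

section AuxLemmas

variable {K : Type u} [Field K] {C : Type u} [AddCommGroup C] [Module K C] [Coalgebra K C]
variable {A : Type u} [Ring A] [Algebra K A]
variable (φ : C ⊗[K] A →ₗ[K] K)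

set_option linter.unusedSectionVars false

lemma topA_eq : topA φ = TopologicalSpace.induced
    (fun (a : A) (c : C) => φ (c ⊗ₜ[K] a))
    (@Pi.topologicalSpace C (fun _ => K) (fun _ => ⊥)) := by
  rw [topA, fintopDual, induced_compose]
  rfl

lemma mem_nhds_topA {a : A} {S : Set A} :
    S ∈ @nhds A (topA φ) a ↔
      ∃ s : Finset C, ∀ b : A, (∀ c ∈ s, φ (c ⊗ₜ[K] b) = φ (c ⊗ₜ[K] a)) → b ∈ S := by
  letI : TopologicalSpace K := ⊥
  haveI : DiscreteTopology K := discreteTopology_bot K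
  rw [topA_eq, nhds_induced, Filter.mem_comap]
  constructor
  · rintro ⟨U, hU, hUS⟩
    rw [nhds_pi] at hU
    rcases Filter.mem_pi'.mp hU with ⟨s, t, ht, hts⟩
    refine ⟨s, fun b hb => hUS ?_⟩
    refine Set.mem_preimage.mpr (hts ?_)
    intro c hc
    show φ (c ⊗ₜ[K] b) ∈ t c
    rw [hb c hc]
    have := ht c
    rwa [nhds_discrete, Filter.mem_pure] at this
  · rintro ⟨s, hs⟩
    refine ⟨{g | ∀ c ∈ s, g c = φ (c ⊗ₜ[K] a)}, ?_, fun b hb => hs b hb⟩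
    rw [nhds_pi]
    refine Filter.mem_pi'.mpr ⟨s, fun c => {φ (c ⊗ₜ[K] a)}, ?_, ?_⟩
    · intro c; rw [nhds_discrete, Filter.mem_pure]; rfl
    · intro g hg c hc; exact hg c hc

noncomputable def Obas (s : Finset C) : Submodule K A :=
  ⨅ c ∈ s, LinearMap.ker (φ ∘ₗ (TensorProduct.mk K C A) c)

lemma mem_obas {s : Finset C} {a : A} :
    a ∈ Obas φ s ↔ ∀ c ∈ s, φ (c ⊗ₜ[K] a) = 0 := by
  simp only [Obas, Submodule.mem_iInf, LinearMap.mem_ker, LinearMap.comp_apply]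
  rfl

lemma obas_antitone {s t : Finset C} (h : s ⊆ t) : Obas φ t ≤ Obas φ s := by
  intro a ha
  rw [mem_obas] at ha ⊢
  exact fun c hc => ha c (h hc)

lemma exists_obas_subset {I : Submodule A A} (h : ClosedCofinite φ I) :
    ∃ s : Finset C, ∀ a : A, (∀ c ∈ s, φ (c ⊗ₜ[K] a) = 0) → a ∈ I := by
  classical
  obtain ⟨hcl, hfd⟩ := h
  set J := I.restrictScalars K with hJ
  haveI : FiniteDimensional K (A ⧸ J) := hfd
  set P : Finset C → Submodule K (A ⧸ J) := fun s => (Obas φ s).map J.mkQ with hP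
  obtain ⟨W, ⟨s₀, rfl⟩, hmin⟩ :=
    IsArtinian.set_has_minimal (Set.range P) ⟨P ∅, Set.mem_range_self _⟩
  have key : ∀ s : Finset C, P s₀ ≤ P s := by
    intro s
    have h1 : P (s₀ ∪ s) ≤ P s₀ :=
      Submodule.map_mono (obas_antitone φ (Finset.subset_union_left))
    have h2 : P (s₀ ∪ s) ≤ P s :=
      Submodule.map_mono (obas_antitone φ (Finset.subset_union_right))
    have he : P (s₀ ∪ s) = P s₀ := by
      by_contra hne
      exact hmin _ (Set.mem_range_self _) (lt_of_le_of_ne h1 hne)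
    rw [← he]; exact h2
  refine ⟨s₀, fun a ha => ?_⟩
  by_contra haI
  letI : TopologicalSpace A := topA φ
  have hnb : (I : Set A)ᶜ ∈ @nhds A (topA φ) a :=
    IsOpen.mem_nhds hcl.isOpen_compl haI
  rcases (mem_nhds_topA φ).mp hnb with ⟨s, hs⟩
  have hpa : J.mkQ a ∈ P s :=
    key s ⟨a, (mem_obas φ).mpr ha, rfl⟩
  rcases hpa with ⟨b, hb, hba⟩
  rw [SetLike.mem_coe, mem_obas] at hb
  have hab : a - b ∈ I := by
    have : J.mkQ (a - b) = 0 := by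
      rw [map_sub, hba, sub_self]
    have h2 : a - b ∈ J := by rwa [← J.ker_mkQ, LinearMap.mem_ker]
    exact h2
  refine hs (a - b) ?_ hab
  intro c hc
  rw [show (c ⊗ₜ[K] (a - b)) = c ⊗ₜ[K] a - c ⊗ₜ[K] b by rw [TensorProduct.tmul_sub],
    map_sub, hb c hc, sub_zero]

lemma closedCofinite_of_le {I J : Submodule A A} (hI : ClosedCofinite φ I) (hle : I ≤ J) :
    ClosedCofinite φ J := by
  obtain ⟨s, hs⟩ := exists_obas_subset φ hI
  constructor
  · letI : TopologicalSpace A := topA φ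
    rw [← isOpen_compl_iff, isOpen_iff_mem_nhds]
    intro a ha
    rw [mem_nhds_topA φ]
    refine ⟨s, fun b hb hbJ => ha ?_⟩
    have h1 : a - b ∈ I := hs _ (fun c hc => by
      rw [TensorProduct.tmul_sub, map_sub, hb c hc, sub_self])
    have h2 : a - b ∈ J := hle h1
    simpa using J.add_mem h2 hbJ
  · haveI := hI.2
    have hle' : I.restrictScalars K ≤
        (J.restrictScalars K).comap (LinearMap.id (R := K) (M := A)) := fun x hx => hle hx
    have hsurj : Function.Surjective
        (Submodule.mapQ (I.restrictScalars K) (J.restrictScalars K) LinearMap.id hle') := by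
      intro y
      obtain ⟨a, rfl⟩ := Submodule.Quotient.mk_surjective _ y
      exact ⟨Submodule.Quotient.mk a, by rw [Submodule.mapQ_apply]; rfl⟩
    exact Module.Finite.of_surjective _ hsurj

lemma closedCofinite_inf {I J : Submodule A A} (hI : ClosedCofinite φ I)
    (hJ : ClosedCofinite φ J) : ClosedCofinite φ (I ⊓ J) := by
  constructor
  · have hset : ((I ⊓ J : Submodule A A) : Set A) = ↑I ∩ ↑J := rfl
    rw [hset]
    exact @IsClosed.inter A _ _ (topA φ) hI.1 hJ.1
  · haveI := hI.2; haveI := hJ.2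
    have hle1 : (I ⊓ J).restrictScalars K ≤
        (I.restrictScalars K).comap (LinearMap.id (R := K) (M := A)) := fun x hx => hx.1
    have hle2 : (I ⊓ J).restrictScalars K ≤
        (J.restrictScalars K).comap (LinearMap.id (R := K) (M := A)) := fun x hx => hx.2
    set f := LinearMap.prod
      (Submodule.mapQ ((I ⊓ J).restrictScalars K) (I.restrictScalars K) LinearMap.id hle1)
      (Submodule.mapQ ((I ⊓ J).restrictScalars K) (J.restrictScalars K) LinearMap.id hle2)
    have hinj : Function.Injective f := by
      rw [← LinearMap.ker_eq_bot, eq_bot_iff]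
      intro x hx
      obtain ⟨a, rfl⟩ := Submodule.Quotient.mk_surjective _ x
      rw [LinearMap.mem_ker] at hx
      have h1 := congrArg Prod.fst hx
      have h2 := congrArg Prod.snd hx
      simp only [f, LinearMap.prod_apply, Function.prod, Submodule.mapQ_apply, Prod.fst_zero,
        Prod.snd_zero, LinearMap.id_coe, id_eq] at h1 h2
      rw [Submodule.Quotient.mk_eq_zero] at h1 h2
      rw [Submodule.mem_bot, Submodule.Quotient.mk_eq_zero]
      exact ⟨h1, h2⟩
    exact FiniteDimensional.of_injective f hinj

lemma conv_apply_eq_sum {f g : C →ₗ[K] K} {c : C} {t : Finset (C × C)}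
    (ht : (Coalgebra.comul (R := K) (A := C)) c = ∑ p ∈ t, p.1 ⊗ₜ[K] p.2) :
    conv f g c = ∑ p ∈ t, f p.1 * g p.2 := by
  simp only [conv, LinearMap.comp_apply, ht, map_sum, TensorProduct.map_tmul,
    LinearMap.mul'_apply]

lemma closedCofinite_comap_mul
    (hconv : ∀ a b : A, pairMap φ (a * b) = conv (pairMap φ a) (pairMap φ b))
    {I : Submodule A A} (hI : ClosedCofinite φ I) (a : A) :
    ClosedCofinite φ (I.comap (LinearMap.toSpanSingleton A A a)) := by
  classical
  constructor
  · letI : TopologicalSpace A := topA φ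
    rw [← isOpen_compl_iff, isOpen_iff_mem_nhds]
    intro b hb
    have hba : b * a ∉ I := hb
    have hnb : (I : Set A)ᶜ ∈ @nhds A (topA φ) (b * a) :=
      IsOpen.mem_nhds hI.1.isOpen_compl hba
    rcases (mem_nhds_topA φ).mp hnb with ⟨s, hs⟩
    choose t ht using fun c : C => TensorProduct.exists_finset
      ((Coalgebra.comul (R := K) (A := C)) c)
    rw [mem_nhds_topA φ]
    refine ⟨s.biUnion (fun c => (t c).image Prod.fst), fun b' hb' hmem => ?_⟩
    refine hs (b' * a) (fun c hc => ?_) hmem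
    have e1 : φ (c ⊗ₜ[K] (b' * a)) = conv (pairMap φ b') (pairMap φ a) c := by
      have := congrArg (fun (f : C →ₗ[K] K) => f c) (hconv b' a)
      exact this
    have e2 : φ (c ⊗ₜ[K] (b * a)) = conv (pairMap φ b) (pairMap φ a) c := by
      have := congrArg (fun (f : C →ₗ[K] K) => f c) (hconv b a)
      exact this
    rw [e1, e2, conv_apply_eq_sum (ht c), conv_apply_eq_sum (ht c)]
    refine Finset.sum_congr rfl (fun p hp => ?_)
    have : φ (p.1 ⊗ₜ[K] b') = φ (p.1 ⊗ₜ[K] b) := by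
      refine hb' p.1 (Finset.mem_biUnion.mpr ⟨c, hc, Finset.mem_image.mpr ⟨p, hp, rfl⟩⟩)
    show pairMap φ b' p.1 * pairMap φ a p.2 = pairMap φ b p.1 * pairMap φ a p.2
    have hpb : pairMap φ b' p.1 = pairMap φ b p.1 := this
    rw [hpb]
  · haveI := hI.2
    set r : A →ₗ[K] A := (LinearMap.toSpanSingleton A A a).restrictScalars K
    have hle : (I.comap (LinearMap.toSpanSingleton A A a)).restrictScalars K ≤
        (I.restrictScalars K).comap r := fun x hx => hx
    set f := Submodule.mapQ _ _ r hle
    have hinj : Function.Injective f := by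
      rw [← LinearMap.ker_eq_bot, eq_bot_iff]
      intro x hx
      obtain ⟨b, rfl⟩ := Submodule.Quotient.mk_surjective _ x
      rw [LinearMap.mem_ker, Submodule.mapQ_apply, Submodule.Quotient.mk_eq_zero] at hx
      rw [Submodule.mem_bot, Submodule.Quotient.mk_eq_zero]
      exact hx
    exact FiniteDimensional.of_injective f hinj

lemma closedCofinite_top : ClosedCofinite φ (⊤ : Submodule A A) := by
  constructor
  · rw [Submodule.top_coe]
    exact @isClosed_univ A (topA φ)
  · haveI : Subsingleton (A ⧸ (⊤ : Submodule A A).restrictScalars K) := by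
      rw [Submodule.Quotient.subsingleton_iff]
      rfl
    infer_instance

lemma mem_ann {N : Type u} [AddCommGroup N] [Module A N] {n : N} {a : A} :
    a ∈ ann N n ↔ a • n = 0 := by
  simp [ann, LinearMap.mem_ker, LinearMap.toSpanSingleton_apply]

lemma ratElem_of_le {N : Type u} [AddCommGroup N] [Module A N] {n : N} {I : Submodule A A}
    (hI : ClosedCofinite φ I) (h : I ≤ ann N n) : RatElem φ N n :=
  closedCofinite_of_le φ hI h

lemma ratElem_zero {N : Type u} [AddCommGroup N] [Module A N] : RatElem φ N (0 : N) := by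
  have h : ann (A := A) N (0 : N) = ⊤ := by
    rw [Submodule.eq_top_iff']
    intro a
    rw [mem_ann]
    exact smul_zero a
  show ClosedCofinite φ (ann N 0)
  rw [h]
  exact closedCofinite_top φ

lemma ratElem_add {N : Type u} [AddCommGroup N] [Module A N] {n m : N}
    (hn : RatElem φ N n) (hm : RatElem φ N m) : RatElem φ N (n + m) := by
  refine ratElem_of_le φ (closedCofinite_inf φ hn hm) (fun a ha => ?_)
  rw [mem_ann, smul_add, mem_ann.mp ha.1, mem_ann.mp ha.2, add_zero]

lemma ratElem_smul
    (hconv : ∀ a b : A, pairMap φ (a * b) = conv (pairMap φ a) (pairMap φ b))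
    {N : Type u} [AddCommGroup N] [Module A N] {n : N} (a : A)
    (hn : RatElem φ N n) : RatElem φ N (a • n) := by
  have h : ann N (a • n) = (ann N n).comap (LinearMap.toSpanSingleton A A a) := by
    ext b
    rw [mem_ann, Submodule.mem_comap, LinearMap.toSpanSingleton_apply, mem_ann,
      smul_eq_mul, mul_smul]
  show ClosedCofinite φ (ann N (a • n))
  rw [h]
  exact closedCofinite_comap_mul φ hconv hn a

noncomputable def ratSub (hconv : ∀ a b : A, pairMap φ (a * b) = conv (pairMap φ a) (pairMap φ b))
    (N : Type u) [AddCommGroup N] [Module A N] : Submodule A N where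
  carrier := {n | RatElem φ N n}
  zero_mem' := ratElem_zero φ
  add_mem' := fun hn hm => ratElem_add φ hn hm
  smul_mem' := fun a n hn => ratElem_smul φ hconv a hn

lemma ann_coe {N : Type u} [AddCommGroup N] [Module A N] (P : Submodule A N) (p : P) :
    ann P p = ann (A := A) N (p : N) := by
  ext b
  rw [mem_ann, mem_ann, ← ZeroMemClass.coe_eq_zero]
  simp

lemma closedCofinite_finset_inf {ι : Type u} (s : Finset ι) (f : ι → Submodule A A)
    (h : ∀ i ∈ s, ClosedCofinite φ (f i)) : ClosedCofinite φ (s.inf f) := by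
  classical
  induction s using Finset.induction_on with
  | empty => simpa using closedCofinite_top φ
  | @insert a s ha ih =>
    rw [Finset.inf_insert]
    exact closedCofinite_inf φ (h _ (Finset.mem_insert_self _ _))
      (ih fun i hi => h i (Finset.mem_insert_of_mem hi))


end AuxLemmas

/-- A left `A`-module is rational (for the pairing `φ`) when all its elements are. -/
def RationalMod {K : Type u} [Field K] {C : Type u} [AddCommGroup C] [Module K C]
    [Coalgebra K C] {A : Type u} [Ring A] [Algebra K A]
    (φ : C ⊗[K] A →ₗ[K] K) (N : Type u) [AddCommGroup N] [Module A N] : Prop :=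
  ∀ n : N, RatElem φ N n

/-- for a rational pairing `φ : C ⊗ A → K` such that `R_φ(N / R_φ(N)) = 0` for
every left `A`-module `N`, the rational modules form a hereditary torsion class: they are
closed under quotients, submodules, coproducts and extensions; every module has a largest
rational submodule with torsion-free quotient; and there are no nonzero morphisms from a
rational module to a module with zero rational part. -/
theorem rational_modules_torsion_class
    {K : Type u} [Field K] {C : Type u} [AddCommGroup C] [Module K C] [Coalgebra K C]
    {A : Type u} [Ring A] [Algebra K A]
    (φ : C ⊗[K] A →ₗ[K] K) (hφ : IsRationalPairing φ)
    (hquot : ∀ (N : Type u) (_ : AddCommGroup N) (_ : Module A N) (R : Submodule A N),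
      (∀ n : N, n ∈ R ↔ RatElem φ N n) →
      ∀ m : N ⧸ R, RatElem φ (N ⧸ R) m → m = 0) :
    (∀ (N : Type u) (_ : AddCommGroup N) (_ : Module A N), RationalMod φ N →
      ∀ P : Submodule A N, RationalMod φ (N ⧸ P)) ∧
    (∀ (N : Type u) (_ : AddCommGroup N) (_ : Module A N), RationalMod φ N →
      ∀ P : Submodule A N, RationalMod φ P) ∧
    (∀ (ι : Type u) (Nf : ι → Type u) (_ : ∀ i, AddCommGroup (Nf i))
        (_ : ∀ i, Module A (Nf i)),
      (∀ i, RationalMod φ (Nf i)) → RationalMod φ (DirectSum ι Nf)) ∧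
    (∀ (N : Type u) (_ : AddCommGroup N) (_ : Module A N) (S : Submodule A N),
      RationalMod φ S → RationalMod φ (N ⧸ S) → RationalMod φ N) ∧
    (∀ (N : Type u) (_ : AddCommGroup N) (_ : Module A N),
      ∃ R : Submodule A N, (∀ n : N, n ∈ R ↔ RatElem φ N n) ∧
        ∀ m : N ⧸ R, RatElem φ (N ⧸ R) m → m = 0) ∧
    (∀ (T F' : Type u) (_ : AddCommGroup T) (_ : Module A T) (_ : AddCommGroup F')
        (_ : Module A F'),
      RationalMod φ T → (∀ f' : F', RatElem φ F' f' → f' = 0) →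
      ∀ g : T →ₗ[A] F', g = 0) := by
  obtain ⟨-, -, hconv⟩ := hφ
  have quotPart : ∀ (N : Type u) (_ : AddCommGroup N) (_ : Module A N), RationalMod φ N →
      ∀ P : Submodule A N, RationalMod φ (N ⧸ P) := by
    intro N _ _ hN P m
    obtain ⟨n, rfl⟩ := Submodule.Quotient.mk_surjective P m
    refine ratElem_of_le φ (hN n) ?_
    intro a ha
    rw [mem_ann] at ha ⊢
    rw [← Submodule.Quotient.mk_smul, ha]
    rfl
  have subPart : ∀ (N : Type u) (_ : AddCommGroup N) (_ : Module A N), RationalMod φ N →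
      ∀ P : Submodule A N, RationalMod φ P := by
    intro N _ _ hN P p
    show ClosedCofinite φ (ann P p)
    rw [ann_coe]
    exact hN p
  have sumPart : ∀ (ι : Type u) (Nf : ι → Type u) (_ : ∀ i, AddCommGroup (Nf i))
      (_ : ∀ i, Module A (Nf i)),
      (∀ i, RationalMod φ (Nf i)) → RationalMod φ (DirectSum ι Nf) := by
    intro ι Nf _ _ hNf x
    classical
    refine ratElem_of_le φ (closedCofinite_finset_inf φ (DFinsupp.support x)
      (fun i => ann (Nf i) (x i)) (fun i _ => hNf i (x i))) ?_
    intro a ha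
    rw [mem_ann]
    refine DFinsupp.ext fun i => ?_
    have hza : (a • x) i = a • (x i) := DFinsupp.smul_apply a x i
    rw [DirectSum.zero_apply, hza]
    by_cases hi : i ∈ DFinsupp.support x
    · have := Submodule.mem_finsetInf.mp ha i hi
      rwa [mem_ann] at this
    · rw [DFinsupp.notMem_support_iff.mp hi, smul_zero]
  have extPart : ∀ (N : Type u) (_ : AddCommGroup N) (_ : Module A N) (S : Submodule A N),
      RationalMod φ S → RationalMod φ (N ⧸ S) → RationalMod φ N := by
    intro N _ _ S hS hQ
    set R : Submodule A N := ratSub φ hconv N with hR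
    have hchar : ∀ n : N, n ∈ R ↔ RatElem φ N n := fun n => Iff.rfl
    have hSR : S ≤ R := by
      intro n hn
      have h1 := hS ⟨n, hn⟩
      rw [hchar]
      show ClosedCofinite φ (ann N n)
      have h2 := ann_coe (A := A) S ⟨n, hn⟩
      rw [← h2]
      exact h1
    have hrat : ∀ m : N ⧸ R, RatElem φ (N ⧸ R) m := by
      intro m
      obtain ⟨n, rfl⟩ := Submodule.Quotient.mk_surjective R m
      refine ratElem_of_le φ (hQ (Submodule.Quotient.mk n)) ?_
      intro a ha
      rw [mem_ann, ← Submodule.Quotient.mk_smul, Submodule.Quotient.mk_eq_zero] at ha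
      rw [mem_ann, ← Submodule.Quotient.mk_smul, Submodule.Quotient.mk_eq_zero]
      exact hSR ha
    intro n
    rw [← hchar]
    have h3 := hquot N _ _ R hchar (Submodule.Quotient.mk n) (hrat _)
    rwa [Submodule.Quotient.mk_eq_zero] at h3
  have exPart : ∀ (N : Type u) (_ : AddCommGroup N) (_ : Module A N),
      ∃ R : Submodule A N, (∀ n : N, n ∈ R ↔ RatElem φ N n) ∧
        ∀ m : N ⧸ R, RatElem φ (N ⧸ R) m → m = 0 := by
    intro N _ _
    refine ⟨ratSub φ hconv N, fun n => Iff.rfl, ?_⟩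
    exact hquot N _ _ _ (fun n => Iff.rfl)
  have homPart : ∀ (T F' : Type u) (_ : AddCommGroup T) (_ : Module A T) (_ : AddCommGroup F')
      (_ : Module A F'),
      RationalMod φ T → (∀ f' : F', RatElem φ F' f' → f' = 0) →
      ∀ g : T →ₗ[A] F', g = 0 := by
    intro T F' _ _ _ _ hT hF' g
    ext t
    rw [LinearMap.zero_apply]
    refine hF' (g t) ?_
    refine ratElem_of_le φ (hT t) ?_
    intro a ha
    rw [mem_ann] at ha ⊢
    rw [← map_smul, ha, map_zero]
  exact ⟨quotPart, subPart, sumPart, extPart, exPart, homPart⟩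


end Formal
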